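/- arXiv:1811.10542 — 3 statements merged into one kernel-verified Lean document; each statement's English description precedes it below -/
import Mathlib

section
/- Let β be a real d×d matrix. Then every complex eigenvalue of β has strictly negative real part if and only if there exists a symmetric positive definite d×d real matrix v such that βv + vβ^⊤ is negative definite (i.e. −(βv + vβ^⊤) is positive definite). -/
open Matrix

noncomputable section

/-- The set of complex eigenvalues of a real square matrix `β`, i.e. the eigenvalues of `β`
regarded as a matrix over `ℂ`. -/
def matCSpectrum {d : ℕ} (β : Matrix (Fin d) (Fin d) ℝ) : Set ℂ :=
  {z : ℂ | ∃ x : Fin d → ℂ, x ≠ 0 ∧ (β.map (Complex.ofReal)).mulVec x = z • x}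

/-!
If `v` is positive definite and `βv + vβᵀ` negative definite, then for an eigenvector `y` of
`βᵀ` with eigenvalue `z` one has `y* (βv + vβᵀ) y = 2 Re z · y* v y`, which forces `Re z < 0`.

Conversely, if every eigenvalue `z` of `β` has `Re z < 0`, then the spectrum of `exp β` lies in
the open unit disc, so by Gelfand's formula some `exp (kβ)` has norm `< 1` and `t ↦ exp (tβ)`
decays exponentially. Hence `v = ∫₀^∞ exp (tβ) exp (tβᵀ) dt` converges, is positive definite,
and `βv + vβᵀ = ∫₀^∞ (d/dt) (exp (tβ) exp (tβᵀ)) dt = -1`.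
-/

open NormedSpace Filter Asymptotics Topology Set MeasureTheory
open scoped ComplexOrder

theorem Module.End.exists_hasEigenvector_mem_eigenspace_of_commute {K V : Type*} [Field K]
    [IsAlgClosed K] [AddCommGroup V] [Module K V] [FiniteDimensional K V] {f g : End K V}
    (h : Commute f g) {μ : K} (hμ : f.HasEigenvalue μ) :
    ∃ l y, g.HasEigenvector l y ∧ y ∈ f.eigenspace μ := by
  have hg : MapsTo g (f.eigenspace μ) (f.eigenspace μ) :=
    mapsTo_genEigenspace_of_comm h μ 1
  have : Nontrivial (f.eigenspace μ) := Submodule.nontrivial_iff_ne_bot.2 hμ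
  obtain ⟨l, hl⟩ := exists_eigenvalue (g.restrict hg)
  obtain ⟨⟨y, hy⟩, hgy, hy0⟩ := hl.exists_hasEigenvector
  refine ⟨l, y, ⟨mem_eigenspace_iff.2 ?_, fun h0 => hy0 (by simpa using h0)⟩, hy⟩
  exact congrArg Subtype.val (mem_eigenspace_iff.1 hgy)

theorem spectrum.exists_norm_pow_lt_one {A : Type*} [NormedRing A] [NormedAlgebra ℂ A]
    [CompleteSpace A] {a : A} (h : ∀ z ∈ spectrum ℂ a, ‖z‖ < 1) : ∃ k, 0 < k ∧ ‖a ^ k‖ < 1 := by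
  cases subsingleton_or_nontrivial A
  · exact ⟨1, one_pos, by simp [Subsingleton.elim (a ^ 1) 0]⟩
  have hρ : spectralRadius ℂ a < 1 := by
    simpa using spectrum.spectralRadius_lt_of_forall_lt a (r := 1) fun z hz => by
      simpa [← NNReal.coe_lt_coe] using h z hz
  obtain ⟨k, hk, hk0⟩ := ((pow_norm_pow_one_div_tendsto_nhds_spectralRadius a).eventually
    (gt_mem_nhds hρ) |>.and (eventually_gt_atTop 0)).exists
  refine ⟨k, hk0, ?_⟩
  rwa [ENNReal.ofReal_lt_one, Real.rpow_lt_one_iff' (norm_nonneg _) (by positivity)] at hk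

theorem norm_mul_pow_le {R : Type*} [SeminormedRing R] (x y : R) (k : ℕ) :
    ‖y * x ^ k‖ ≤ ‖y‖ * ‖x‖ ^ k := by
  induction k with
  | zero => simp
  | succ k ih =>
    rw [pow_succ, ← mul_assoc, pow_succ, ← mul_assoc]
    exact (norm_mul_le _ _).trans (mul_le_mul_of_nonneg_right ih (norm_nonneg _))

theorem isBigO_exp_smul_of_norm_exp_lt_one {𝔸 : Type*} [NormedRing 𝔸] [NormedAlgebra ℝ 𝔸]
    [NormedAlgebra ℚ 𝔸] [CompleteSpace 𝔸] {a : 𝔸} {T : ℝ} (hT : 0 < T) (h : ‖exp (T • a)‖ < 1) :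
    ∃ ε > 0, (fun t : ℝ => exp (t • a)) =O[atTop] fun t => Real.exp (-ε * t) := by
  obtain ⟨r, hqr, hr1, hr0⟩ : ∃ r, ‖exp (T • a)‖ < r ∧ r < 1 ∧ 0 < r :=
    ⟨(‖exp (T • a)‖ + 1) / 2, by linarith, by linarith, by positivity⟩
  set ε := -Real.log r / T
  have hε : 0 < ε := div_pos (neg_pos.2 (Real.log_neg hr0 hr1)) hT
  have hcont : Continuous fun s : ℝ => exp (s • a) :=
    exp_continuous.comp (continuous_id.smul continuous_const)
  obtain ⟨B, hB⟩ :=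
    (isCompact_Icc (a := 0) (b := T)).exists_bound_of_continuousOn hcont.continuousOn
  -- with `k = ⌊t / T⌋`: `‖exp (t • a)‖ ≤ B r ^ k` and `r ^ k = exp (-ε T k) ≤ exp (ε T) exp (-ε t)`
  refine ⟨ε, hε, IsBigO.of_bound (B * Real.exp (ε * T)) ?_⟩
  filter_upwards [eventually_ge_atTop 0] with t ht
  set k := ⌊t / T⌋₊
  have hkT : (k : ℝ) * T ≤ t := (le_div_iff₀ hT).1 (Nat.floor_le (div_nonneg ht hT.le))
  have hTk : t - T < k * T := by
    have := Nat.lt_floor_add_one (t / T)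
    rw [div_lt_iff₀ hT] at this
    linarith
  have hsplit : exp (t • a) = exp ((t - k * T) • a) * exp (T • a) ^ k := by
    rw [← NormedSpace.exp_nsmul, ← Nat.cast_smul_eq_nsmul ℝ, smul_smul,
      ← NormedSpace.exp_add_of_commute ((Commute.refl a).smul_left _ |>.smul_right _), ← add_smul]
    ring_nf
  have hrk : r ^ k ≤ Real.exp (ε * T) * Real.exp (-ε * t) := by
    rw [← Real.exp_add, ← Real.exp_log (pow_pos hr0 k), Real.log_pow]
    refine Real.exp_le_exp.2 ?_
    have : Real.log r = -ε * T := by simp only [ε]; field_simp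
    rw [this]
    nlinarith
  rw [Real.norm_of_nonneg (Real.exp_nonneg _), hsplit, mul_assoc]
  calc _ ≤ ‖exp ((t - k * T) • a)‖ * ‖exp (T • a)‖ ^ k := norm_mul_pow_le _ _ _
    _ ≤ B * r ^ k := by
      gcongr
      · exact (norm_nonneg _).trans (hB 0 ⟨le_rfl, hT.le⟩)
      · exact hB _ ⟨by linarith, by linarith⟩
    _ ≤ _ := by gcongr; exact (norm_nonneg _).trans (hB 0 ⟨le_rfl, hT.le⟩)

theorem integrableOn_Ioi_of_isBigO_exp_neg {E : Type*} [NormedAddCommGroup E] {f : ℝ → E}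
    {a b : ℝ} (hb : 0 < b) (hf : Continuous f) (ho : f =O[atTop] fun t => Real.exp (-b * t)) :
    IntegrableOn f (Ioi a) :=
  ((hf.continuousOn.locallyIntegrableOn measurableSet_Ici).integrableOn_of_isBigO_atTop ho
    ⟨Ioi b, Ioi_mem_atTop b, exp_neg_integrableOn_Ioi b hb⟩).mono_set Ioi_subset_Ici_self

namespace Matrix

variable {n : Type*} [Fintype n]

theorem re_star_dotProduct_map_ofReal_mulVec (w : Matrix n n ℝ) (y : n → ℂ) :
    (star y ⬝ᵥ (w.map Complex.ofReal *ᵥ y)).re =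
      (fun i => (y i).re) ⬝ᵥ (w *ᵥ fun i => (y i).re) +
        (fun i => (y i).im) ⬝ᵥ (w *ᵥ fun i => (y i).im) := by
  simp only [dotProduct, mulVec, Finset.mul_sum, ← Finset.sum_add_distrib, Complex.re_sum]
  refine Finset.sum_congr rfl fun i _ => Finset.sum_congr rfl fun j _ => ?_
  simp [Complex.mul_re, Complex.mul_im]

theorem PosDef.map_ofReal {w : Matrix n n ℝ} (hw : w.PosDef) :
    (w.map Complex.ofReal).PosDef := by
  have hH : (w.map Complex.ofReal).IsHermitian :=
    hw.isHermitian.map _ fun _ => (Complex.conj_ofReal _).symm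
  refine PosDef.of_dotProduct_mulVec_pos hH fun y hy => RCLike.pos_iff.2
    ⟨?_, hH.im_star_dotProduct_mulVec_self y⟩
  change 0 < (star y ⬝ᵥ (w.map Complex.ofReal *ᵥ y)).re
  rw [re_star_dotProduct_map_ofReal_mulVec]
  have hnn (x : n → ℝ) : 0 ≤ x ⬝ᵥ (w *ᵥ x) := by
    simpa using hw.posSemidef.dotProduct_mulVec_nonneg x
  have hpos {x : n → ℝ} (hx : x ≠ 0) : 0 < x ⬝ᵥ (w *ᵥ x) := by
    simpa using hw.dotProduct_mulVec_pos hx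
  by_cases h : (fun i => (y i).re) = 0
  · have h' : (fun i => (y i).im) ≠ 0 := fun h' => hy <| funext fun i =>
      Complex.ext (congrFun h i) (congrFun h' i)
    linarith [hpos h', hnn fun i => (y i).re]
  · linarith [hpos h, hnn fun i => (y i).im]

theorem re_lt_zero_of_conjTranspose_mulVec_eq_smul {𝕜 : Type*} [RCLike 𝕜] {A V : Matrix n n 𝕜}
    (hV : V.PosDef) (hL : (-(A * V + V * Aᴴ)).PosDef) {z : 𝕜} {y : n → 𝕜} (hy : y ≠ 0)
    (hAy : Aᴴ *ᵥ y = z • y) : RCLike.re z < 0 := by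
  have hform : star y ⬝ᵥ ((A * V + V * Aᴴ) *ᵥ y) =
      ((2 * RCLike.re z : ℝ) : 𝕜) * (star y ⬝ᵥ (V *ᵥ y)) := by
    have h1 : star y ⬝ᵥ (A *ᵥ (V *ᵥ y)) = star z * (star y ⬝ᵥ (V *ᵥ y)) := by
      rw [dotProduct_mulVec, ← conjTranspose_conjTranspose A, ← star_mulVec, hAy, star_smul,
        smul_dotProduct, smul_eq_mul]
    rw [add_mulVec, ← mulVec_mulVec, ← mulVec_mulVec, hAy, dotProduct_add, h1, mulVec_smul,
      dotProduct_smul, smul_eq_mul, ← add_mul, add_comm]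
    push_cast
    exact congrArg (· * _) (RCLike.add_conj z)
  have hc := hV.re_dotProduct_pos hy
  have hneg := hL.re_dotProduct_pos hy
  rw [neg_mulVec, dotProduct_neg, map_neg, hform, RCLike.re_ofReal_mul] at hneg
  nlinarith

open scoped Norms.Operator in
theorem linfty_opNorm_map {m α β : Type*} [Fintype m] [SeminormedAddCommGroup α]
    [SeminormedAddCommGroup β] (A : Matrix m n α) {f : α → β} (hf : ∀ a, ‖f a‖ = ‖a‖) :
    ‖A.map f‖ = ‖A‖ := by
  have hf' (a : α) : ‖f a‖₊ = ‖a‖₊ := NNReal.eq (hf a)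
  simp [linfty_opNorm_def, hf']

variable [DecidableEq n]

theorem mem_spectrum_iff_exists_mulVec_eq_smul {K : Type*} [Field K] {A : Matrix n n K} {z : K} :
    z ∈ spectrum K A ↔ ∃ x ≠ 0, A *ᵥ x = z • x := by
  rw [spectrum.mem_iff, isUnit_iff_isUnit_det, isUnit_iff_ne_zero, not_not,
    ← exists_mulVec_eq_zero_iff]
  simp only [Algebra.algebraMap_eq_smul_one, sub_mulVec, smul_mulVec, one_mulVec, sub_eq_zero,
    eq_comm (a := z • _)]

theorem spectrum_transpose {K : Type*} [Field K] (A : Matrix n n K) :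
    spectrum K Aᵀ = spectrum K A := by
  ext z
  rw [spectrum.mem_iff, spectrum.mem_iff, isUnit_iff_isUnit_det, isUnit_iff_isUnit_det,
    ← det_transpose, transpose_sub, transpose_transpose, Algebra.algebraMap_eq_smul_one,
    transpose_smul, transpose_one]

theorem pow_mulVec_of_mulVec_eq_smul {R : Type*} [CommSemiring R] {A : Matrix n n R}
    {x : n → R} {l : R} (h : A *ᵥ x = l • x) (k : ℕ) : (A ^ k) *ᵥ x = l ^ k • x := by
  induction k with
  | zero => simp
  | succ k ih => rw [pow_succ, ← mulVec_mulVec, h, mulVec_smul, ih, smul_smul, pow_succ']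

theorem posDef_exp_mul_exp_transpose (A : Matrix n n ℝ) : (exp A * exp Aᵀ).PosDef := by
  have h := PosDef.conjTranspose_mul_self (exp Aᵀ)
    (mulVec_injective_iff_isUnit.2 (isUnit_exp Aᵀ))
  rw [exp_transpose]
  rwa [conjTranspose_eq_transpose_of_trivial, exp_transpose, transpose_transpose] at h

theorem re_lt_zero_of_mem_spectrum_map_ofReal {β v : Matrix n n ℝ} (hv : v.PosDef)
    (hL : (-(β * v + v * βᵀ)).PosDef) {z : ℂ} (hz : z ∈ spectrum ℂ (β.map Complex.ofReal)) :
    z.re < 0 := by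
  have hA : (β.map Complex.ofReal)ᴴ = βᵀ.map Complex.ofReal := by ext; simp
  rw [← spectrum_transpose, ← transpose_map, mem_spectrum_iff_exists_mulVec_eq_smul] at hz
  obtain ⟨y, hy, hβy⟩ := hz
  have hmap : (-(β * v + v * βᵀ)).map Complex.ofReal = -(β.map Complex.ofReal *
      v.map Complex.ofReal + v.map Complex.ofReal * (β.map Complex.ofReal)ᴴ) := by
    rw [hA]
    ext i j
    simp [mul_apply]
  exact re_lt_zero_of_conjTranspose_mulVec_eq_smul hv.map_ofReal (hmap ▸ hL.map_ofReal) hy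
    (hA ▸ hβy)

open scoped Norms.Operator in
theorem exp_mulVec_of_mulVec_eq_smul {𝕂 : Type*} [RCLike 𝕂] {A : Matrix n n 𝕂} {x : n → 𝕂}
    {l : 𝕂} (h : A *ᵥ x = l • x) : exp A *ᵥ x = exp l • x := by
  have hA := (exp_series_hasSum_exp' (𝕂 := 𝕂) A).map (mulVec.addMonoidHomLeft x)
    (continuous_id.matrix_mulVec continuous_const)
  refine hA.unique ?_
  convert (exp_series_hasSum_exp' (𝕂 := 𝕂) l).smul_const x using 2 with k
  simp [mulVec.addMonoidHomLeft, smul_mulVec, pow_mulVec_of_mulVec_eq_smul h, smul_smul]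

theorem spectrum_exp_subset (A : Matrix n n ℂ) :
    spectrum ℂ (exp A) ⊆ Complex.exp '' spectrum ℂ A := by
  intro μ hμ
  rw [← spectrum_toLin', ← Module.End.hasEigenvalue_iff_mem_spectrum] at hμ
  obtain ⟨l, y, hy, hyμ⟩ := Module.End.exists_hasEigenvector_mem_eigenspace_of_commute
    ((Commute.refl A).exp_left.map toLinAlgEquiv') hμ
  rw [Module.End.mem_eigenspace_iff, toLinAlgEquiv'_apply] at hyμ
  have hAy : A *ᵥ y = l • y := by simpa using hy.apply_eq_smul
  refine ⟨l, mem_spectrum_iff_exists_mulVec_eq_smul.2 ⟨y, hy.2, hAy⟩, ?_⟩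
  have := exp_mulVec_of_mulVec_eq_smul hAy
  rw [hyμ, ← Complex.exp_eq_exp_ℂ] at this
  exact smul_left_injective ℂ hy.2 this.symm

section OperatorNorm

open scoped Norms.Operator

/- Integrals need the topology instance on matrices to be the one of the norm, so the product
topology is switched off. Lemmas about `exp` stated for the product topology then still apply,
but only up to unfolding: through `exact`, not `rw` or `simp`. -/
attribute [-instance] instTopologicalSpaceMatrix instUniformSpace

theorem map_ofReal_exp (A : Matrix n n ℝ) :
    (exp A).map Complex.ofReal = exp (A.map Complex.ofReal) :=
  map_exp (Complex.ofRealHom.mapMatrix) (continuous_id.matrix_map Complex.continuous_ofReal) A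

theorem isBigO_exp_smul_of_forall_re_neg (β : Matrix n n ℝ)
    (h : ∀ z ∈ spectrum ℂ (β.map Complex.ofReal), z.re < 0) :
    ∃ ε > 0, (fun t : ℝ => exp (t • β)) =O[atTop] fun t => Real.exp (-ε * t) := by
  obtain ⟨k, hk0, hk⟩ := spectrum.exists_norm_pow_lt_one (a := exp (β.map Complex.ofReal))
    fun μ hμ => by
      obtain ⟨l, hl, rfl⟩ := spectrum_exp_subset _ hμ
      simpa [Complex.norm_exp] using h l hl
  refine isBigO_exp_smul_of_norm_exp_lt_one (T := k) (by positivity) ?_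
  have hmap : (exp β ^ k).map Complex.ofReal = exp (β.map Complex.ofReal) ^ k := by
    rw [← map_ofReal_exp]
    exact map_pow (Complex.ofRealHom.mapMatrix (m := n)) _ k
  rwa [Nat.cast_smul_eq_nsmul, NormedSpace.exp_nsmul, ← linfty_opNorm_map _ Complex.norm_real,
    hmap]

theorem PosDef.integral {α : Type*} [MeasurableSpace α] {μ : Measure α} [NeZero μ]
    {g : α → Matrix n n ℝ} (hg : Integrable g μ) (hpos : ∀ t, (g t).PosDef) :
    (∫ t, g t ∂μ).PosDef := by
  refine PosDef.of_dotProduct_mulVec_pos ?_ fun x hx => ?_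
  · let L : Matrix n n ℝ →L[ℝ] Matrix n n ℝ :=
      LinearMap.toContinuousLinearMap (transposeLinearEquiv n n ℝ ℝ).toLinearMap
    calc (∫ t, g t ∂μ)ᴴ = L (∫ t, g t ∂μ) := conjTranspose_eq_transpose_of_trivial _
      _ = ∫ t, (g t)ᴴ ∂μ := (L.integral_comp_comm hg).symm
      _ = ∫ t, g t ∂μ := by simp_rw [fun t => (hpos t).isHermitian.eq]
  · let Q : Matrix n n ℝ →ₗ[ℝ] ℝ :=
      { toFun A := x ⬝ᵥ A *ᵥ x
        map_add' A B := by simp [add_mulVec]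
        map_smul' c A := by simp [smul_mulVec] }
    have hpos' (t : α) : 0 < Q.toContinuousLinearMap (g t) := (hpos t).dotProduct_mulVec_pos hx
    change 0 < Q.toContinuousLinearMap (∫ t, g t ∂μ)
    rw [← ContinuousLinearMap.integral_comp_comm _ hg, integral_pos_iff_support_of_nonneg
      (fun t => (hpos' t).le) (Q.toContinuousLinearMap.integrable_comp hg),
      Function.support_eq_univ fun t => (hpos' t).ne']
    exact Measure.measure_univ_pos.2 (NeZero.ne μ)

theorem mul_integral_add_integral_mul_transpose_eq_neg_one (β : Matrix n n ℝ)
    (hint : IntegrableOn (fun t : ℝ => exp (t • β) * exp (t • βᵀ)) (Ioi 0))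
    (hlim : Tendsto (fun t : ℝ => exp (t • β) * exp (t • βᵀ)) atTop (𝓝 0)) :
    β * (∫ t in Ioi (0 : ℝ), exp (t • β) * exp (t • βᵀ)) +
      (∫ t in Ioi (0 : ℝ), exp (t • β) * exp (t • βᵀ)) * βᵀ = -1 := by
  let L : Matrix n n ℝ →L[ℝ] Matrix n n ℝ :=
    LinearMap.toContinuousLinearMap (LinearMap.mulLeft ℝ β + LinearMap.mulRight ℝ βᵀ)
  have hderiv (t : ℝ) : HasDerivAt (fun t : ℝ => exp (t • β) * exp (t • βᵀ))
      (L (exp (t • β) * exp (t • βᵀ))) t := by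
    refine ((hasDerivAt_exp_smul_const' β t).mul (hasDerivAt_exp_smul_const βᵀ t)).congr_deriv ?_
    change _ = β * (exp (t • β) * exp (t • βᵀ)) + exp (t • β) * exp (t • βᵀ) * βᵀ
    simp only [mul_assoc]
  change L _ = _
  rw [← L.integral_comp_comm hint]
  simpa using integral_Ioi_of_hasDerivAt_of_tendsto' (fun t _ => hderiv t)
    (L.integrable_comp hint) hlim

theorem exists_posDef_mul_add_mul_transpose_eq_neg_one (β : Matrix n n ℝ)
    (h : ∀ z ∈ spectrum ℂ (β.map Complex.ofReal), z.re < 0) :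
    ∃ v : Matrix n n ℝ, v.PosDef ∧ β * v + v * βᵀ = -1 := by
  obtain ⟨ε₁, hε₁, h₁⟩ := isBigO_exp_smul_of_forall_re_neg β h
  obtain ⟨ε₂, hε₂, h₂⟩ := isBigO_exp_smul_of_forall_re_neg βᵀ
    (by rwa [transpose_map, spectrum_transpose])
  have hG : (fun t : ℝ => exp (t • β) * exp (t • βᵀ)) =O[atTop]
      fun t => Real.exp (-(ε₁ + ε₂) * t) := by
    simpa only [← Real.exp_add, ← add_mul, neg_add] using h₁.mul h₂
  have hGint := integrableOn_Ioi_of_isBigO_exp_neg (a := 0) (by positivity)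
    ((exp_continuous.comp (continuous_id.smul continuous_const)).mul
      (exp_continuous.comp (continuous_id.smul continuous_const))) hG
  have hGlim := hG.trans_tendsto <|
    Real.tendsto_exp_atBot.comp (tendsto_id.const_mul_atTop_of_neg (by linarith))
  have : NeZero (volume.restrict (Ioi (0 : ℝ))) := ⟨by simp⟩
  refine ⟨_, PosDef.integral hGint fun t => ?_,
    mul_integral_add_integral_mul_transpose_eq_neg_one β hGint hGlim⟩
  have := posDef_exp_mul_exp_transpose (t • β)
  rw [transpose_smul] at this
  exact this

end OperatorNorm

end Matrix

theorem matCSpectrum_eq_spectrum {d : ℕ} (β : Matrix (Fin d) (Fin d) ℝ) :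
    matCSpectrum β = spectrum ℂ (β.map Complex.ofReal) := by
  ext z
  exact mem_spectrum_iff_exists_mulVec_eq_smul.symm

/-- Every complex eigenvalue of a real `d×d` matrix `β` has strictly negative real part iff
there is a symmetric positive definite real matrix `v` such that `βv + vβᵀ` is negative
definite. -/
theorem eigenvalues_neg_re_iff_lyapunov {d : ℕ} (β : Matrix (Fin d) (Fin d) ℝ) :
    (∀ z ∈ matCSpectrum β, z.re < 0) ↔
      ∃ v : Matrix (Fin d) (Fin d) ℝ, v.PosDef ∧ (-(β * v + v * βᵀ)).PosDef := by
  rw [matCSpectrum_eq_spectrum]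
  constructor
  · intro h
    obtain ⟨v, hv, hL⟩ := exists_posDef_mul_add_mul_transpose_eq_neg_one β h
    exact ⟨v, hv, by rw [hL, neg_neg]; exact PosDef.one⟩
  · rintro ⟨v, hv, hL⟩ z hz
    exact re_lt_zero_of_mem_spectrum_map_ofReal hv hL hz

end
end

section
/- Let V be a finite-dimensional real inner product space, K ⊆ V a generating proper closed convex cone, and A : V → V a linear map. Then A is quasimonotone increasing with respect to K if and only if for every t ≥ 0 the matrix exponential satisfies exp(tA)(K) ⊆ K. -/
open scoped RealInnerProductSpace

noncomputable section

variable {V : Type*} [NormedAddCommGroup V] [InnerProductSpace ℝ V]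

/-- The dual cone of a set `K` in a real inner product space. -/
def dualCone (K : Set V) : Set V := {u : V | ∀ x ∈ K, 0 ≤ ⟪u, x⟫}

/-- `K` is a generating proper closed convex cone. -/
structure IsGenProperClosedConvexCone (K : Set V) : Prop where
  closed : IsClosed K
  convex : Convex ℝ K
  smul_mem : ∀ c : ℝ, 0 ≤ c → ∀ x ∈ K, c • x ∈ K
  generating : ∀ v : V, ∃ x ∈ K, ∃ y ∈ K, v = x - y
  proper : ∀ x ∈ K, -x ∈ K → x = 0

/-- `A` is quasimonotone increasing with respect to the cone `K`. -/
def IsQMI (K : Set V) (A : V →ₗ[ℝ] V) : Prop :=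
  ∀ x ∈ K, ∀ v ∈ dualCone K, ⟪v, x⟫ = 0 → 0 ≤ ⟪v, A x⟫

variable [FiniteDimensional ℝ V]

/-- The set of complex eigenvalues of a real linear map, i.e. the complex roots of its
characteristic polynomial. -/
def cSpectrum (A : V →ₗ[ℝ] V) : Set ℂ :=
  {z : ℂ | Polynomial.aeval z (LinearMap.charpoly A) = 0}

/-- The spectral bound `τ(A)`. -/
def specBound (A : V →ₗ[ℝ] V) : ℝ := sSup (Complex.re '' cSpectrum A)

/-- The spectral radius `ρ(A)`. -/
def specRadius (A : V →ₗ[ℝ] V) : ℝ := sSup ((fun z : ℂ => ‖z‖) '' cSpectrum A)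

/-!
If `A` is quasimonotone, the squared distance `f t = d(exp (t A) x, K)²` satisfies the Dini bound
`D⁺f ≤ 2‖A‖ f`: at the nearest point `p ∈ K` to `u = exp (t A) x`, the vector `p - u` lies in `K*`
and is orthogonal to `p`, so quasimonotonicity gives `⟪u - p, A u⟫ ≤ ‖A‖ ‖u - p‖²`, and `f` is
dominated near `t` by the differentiable `‖exp (s A) x - p‖²`. Grönwall's inequality with `f 0 = 0`
forces `f = 0`. Conversely, `t ↦ ⟪v, exp (t A) x⟫` is nonnegative on `[0, ∞)` and vanishes at `0`,
so its derivative `⟪v, A x⟫` at `0` is nonnegative.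
-/

theorem eventually_slope_lt_of_le_of_hasDerivWithinAt {f φ : ℝ → ℝ} {s d r : ℝ}
    (hle : ∀ z, f z ≤ φ z) (heq : f s = φ s) (hφ : HasDerivWithinAt φ d (Set.Ici s) s)
    (hr : d < r) : ∀ᶠ z in nhdsWithin s (Set.Ioi s), (z - s)⁻¹ * (f z - f s) < r := by
  filter_upwards [hφ.Ioi_of_Ici.limsup_slope_le' (lt_irrefl s) hr, self_mem_nhdsWithin]
    with z hslope hsz
  calc (z - s)⁻¹ * (f z - f s) ≤ slope φ s z := by
        rw [slope_def_field, div_eq_inv_mul, heq]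
        exact mul_le_mul_of_nonneg_left (by linarith [hle z])
          (inv_nonneg.2 (sub_nonneg.2 (Set.mem_Ioi.1 hsz).le))
    _ < r := hslope

theorem IsMinOn.hasDerivWithinAt_Ici_nonneg {g : ℝ → ℝ} {a d : ℝ}
    (hmin : IsMinOn g (Set.Ici a) a) (hg : HasDerivWithinAt g d (Set.Ici a) a) : 0 ≤ d := by
  have hone : (1 : ℝ) ∈ posTangentConeAt (Set.Ici a) a :=
    mem_posTangentConeAt_of_segment_subset (by
      rw [segment_eq_Icc (by linarith)]
      exact Set.Icc_subset_Ici_self)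
  simpa using hmin.localize.hasFDerivWithinAt_nonneg hg.hasFDerivWithinAt hone

section

variable {E : Type*} [NormedAddCommGroup E] [InnerProductSpace ℝ E] {K : Set E}

namespace IsGenProperClosedConvexCone

theorem zero_mem (hK : IsGenProperClosedConvexCone K) : (0 : E) ∈ K := by
  obtain ⟨x, hx, -⟩ := hK.generating 0
  simpa using hK.smul_mem 0 le_rfl x hx

theorem add_mem (hK : IsGenProperClosedConvexCone K) {x y : E} (hx : x ∈ K) (hy : y ∈ K) :
    x + y ∈ K := by
  have hmid := hK.convex hx hy (by norm_num : (0 : ℝ) ≤ 2⁻¹) (by norm_num : (0 : ℝ) ≤ 2⁻¹)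
    (by norm_num)
  simpa [smul_smul, ← smul_add] using hK.smul_mem 2 zero_le_two _ hmid

theorem exists_nearest_point [CompleteSpace E] (hK : IsGenProperClosedConvexCone K) (u : E) :
    ∃ p ∈ K, p - u ∈ dualCone K ∧ ⟪p - u, p⟫ = 0 ∧ ‖u - p‖ = Metric.infDist u K := by
  obtain ⟨p, hp, hmin⟩ := exists_norm_eq_iInf_of_complete_convex ⟨0, hK.zero_mem⟩
    hK.closed.isComplete hK.convex u
  have hvar := (norm_eq_iInf_iff_real_inner_le_zero hK.convex hp).1 hmin
  have hneg : ∀ w, ⟪p - u, w⟫ = -⟪u - p, w⟫ := fun w => by rw [← neg_sub u p, inner_neg_left]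
  have hdual : p - u ∈ dualCone K := fun k hk => by
    have := hvar (p + k) (hK.add_mem hp hk)
    rw [add_sub_cancel_left] at this
    linarith [hneg k]
  refine ⟨p, hp, hdual, le_antisymm ?_ (hdual p hp), ?_⟩
  · have := hvar 0 hK.zero_mem
    rw [zero_sub, inner_neg_right] at this
    linarith [hneg p]
  · rw [Metric.infDist_eq_iInf, hmin]
    simp only [dist_eq_norm]

end IsGenProperClosedConvexCone

theorem IsQMI.inner_sub_le {A : E →L[ℝ] E} (hA : IsQMI K (A : E →ₗ[ℝ] E)) {u p : E}
    (hp : p ∈ K) (hdual : p - u ∈ dualCone K) (horth : ⟪p - u, p⟫ = 0) :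
    ⟪u - p, A u⟫ ≤ ‖A‖ * ‖u - p‖ ^ 2 := by
  have hAp : 0 ≤ ⟪p - u, A p⟫ := hA p hp (p - u) hdual horth
  have hAq : ⟪u - p, A (u - p)⟫ ≤ ‖A‖ * ‖u - p‖ ^ 2 := calc
    ⟪u - p, A (u - p)⟫ ≤ ‖u - p‖ * ‖A (u - p)‖ := real_inner_le_norm _ _
    _ ≤ ‖u - p‖ * (‖A‖ * ‖u - p‖) := by gcongr; exact A.le_opNorm _
    _ = ‖A‖ * ‖u - p‖ ^ 2 := by ring
  have hsplit : ⟪u - p, A u⟫ = ⟪u - p, A (u - p)⟫ - ⟪p - u, A p⟫ := by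
    rw [map_sub, inner_sub_right, ← neg_sub u p, inner_neg_left]; ring
  linarith

theorem IsQMI.mem_of_hasDerivAt [CompleteSpace E] (hK : IsGenProperClosedConvexCone K)
    {A : E →L[ℝ] E} (hA : IsQMI K (A : E →ₗ[ℝ] E)) {c : ℝ → E}
    (hc : ∀ s, HasDerivAt c (A (c s)) s) (h0 : c 0 ∈ K) {t : ℝ} (ht : 0 ≤ t) : c t ∈ K := by
  set f : ℝ → ℝ := fun s => Metric.infDist (c s) K ^ 2
  have hf : Continuous f :=
    ((Metric.continuous_infDist_pt K).comp (continuous_iff_continuousAt.2 fun s =>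
      (hc s).continuousAt)).pow 2
  have hslope : ∀ s r, 2 * ‖A‖ * f s < r →
      ∀ᶠ z in nhdsWithin s (Set.Ioi s), (z - s)⁻¹ * (f z - f s) < r := by
    intro s r hr
    obtain ⟨p, hp, hdual, horth, hdist⟩ := hK.exists_nearest_point (c s)
    refine eventually_slope_lt_of_le_of_hasDerivWithinAt (φ := fun z => ‖c z - p‖ ^ 2)
      (fun z => ?_) (by simp only [f, hdist]) ((hc s).sub_const p).norm_sq.hasDerivWithinAt
      (lt_of_le_of_lt ?_ hr)
    · rw [← dist_eq_norm]
      exact pow_le_pow_left₀ Metric.infDist_nonneg (Metric.infDist_le_dist_of_mem hp) 2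
    · simp only [f, ← hdist]
      linarith [hA.inner_sub_le hp hdual horth]
  have hft := le_gronwallBound_of_liminf_deriv_right_le (f' := fun s => 2 * ‖A‖ * f s)
    (δ := 0) (K := 2 * ‖A‖) (ε := 0) hf.continuousOn
    (fun s _ r hr => (hslope s r hr).frequently) (by simp [f, Metric.infDist_zero_of_mem h0])
    (fun _ _ => (add_zero _).symm.le) t ⟨ht, le_rfl⟩
  rw [gronwallBound_ε0_δ0] at hft
  have hdist : Metric.infDist (c t) K = 0 :=
    (pow_eq_zero_iff two_ne_zero).1 (le_antisymm hft (sq_nonneg _))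
  exact (hK.closed.mem_iff_infDist_zero ⟨0, hK.zero_mem⟩).2 hdist

theorem hasDerivAt_exp_smul_apply [CompleteSpace E] (A : E →L[ℝ] E) (x : E) (t : ℝ) :
    HasDerivAt (fun s : ℝ => NormedSpace.exp (s • A) x) (A (NormedSpace.exp (t • A) x)) t := by
  simpa using (hasDerivAt_exp_smul_const' (𝕂 := ℝ) A t).clm_apply (hasDerivAt_const t x)

theorem isQMI_of_exp_mem [CompleteSpace E] {A : E →L[ℝ] E}
    (h : ∀ t : ℝ, 0 ≤ t → ∀ x ∈ K, NormedSpace.exp (t • A) x ∈ K) : IsQMI K (A : E →ₗ[ℝ] E) := by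
  intro x hx v hv hvx
  refine IsMinOn.hasDerivWithinAt_Ici_nonneg (g := fun s => ⟪v, NormedSpace.exp (s • A) x⟫)
    (a := 0) (fun s hs => ?_) ?_
  · simpa [hvx] using hv _ (h s hs x hx)
  · simpa using ((hasDerivAt_const (0 : ℝ) v).inner ℝ
      (hasDerivAt_exp_smul_apply A x 0)).hasDerivWithinAt

end

/-- A linear map `A` on a finite-dimensional real inner product space is quasimonotone
increasing with respect to a generating proper closed convex cone `K` iff for every `t ≥ 0`
the exponential `exp (t A)` maps `K` into `K`. -/
theorem qmi_iff_exp_maps_cone (K : Set V) (hK : IsGenProperClosedConvexCone K)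
    (A : V →ₗ[ℝ] V) :
    IsQMI K A ↔
      ∀ t : ℝ, 0 ≤ t → ∀ x ∈ K,
        NormedSpace.exp (t • LinearMap.toContinuousLinearMap A) x ∈ K := by
  refine ⟨fun hA t ht x hx => ?_, isQMI_of_exp_mem⟩
  exact IsQMI.mem_of_hasDerivAt hK hA (hasDerivAt_exp_smul_apply _ x) (by simpa using hx) ht

end
end

section
/- Let V be a finite-dimensional real inner product space, K ⊆ V a generating proper closed convex cone, and A : V → V a linear map. Then A is quasimonotone increasing with respect to K if and only if for every real λ > τ(A) the map λ·id − A is invertible and (λ·id − A)^{-1}(K) ⊆ K. -/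
/-!
For large `λ` the resolvent `R(λ) = (λ - A)⁻¹` is positive by a projection argument: write
`x = R(λ) y` with `y ∈ K` as `x = p - v`, where `p` is the nearest point of `K` to `x`, so that
`v ∈ K*` and `⟪v, p⟫ = 0`; quasimonotonicity then gives `0 ≤ ⟪v, y⟫ ≤ (‖A‖ - λ) ‖v‖²`, so
`v = 0`. Positivity propagates down to `τ(A)` by continuous induction: the set of `λ` with
`R(λ) K ⊆ K` is closed, and from any of its points `μ` the Neumann series
`R(λ) = ∑ (μ - λ)ⁿ R(μ)ⁿ⁺¹` reaches slightly to the left.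
Conversely, for `x ∈ K`, `v ∈ K*` with `⟪v, x⟫ = 0` one has `⟪v, λ R(λ) A x⟫ = λ² ⟪v, R(λ) x⟫ ≥ 0`,
and `λ R(λ) → 1` as `λ → ∞`.
-/

open scoped RealInnerProductSpace

noncomputable section

variable {V : Type*} [NormedAddCommGroup V] [InnerProductSpace ℝ V]

variable [FiniteDimensional ℝ V]

open Filter Set Topology

section Resolvent

variable {𝕜 A : Type*} [NontriviallyNormedField 𝕜] [NormedRing A] [NormedAlgebra 𝕜 A]

lemma resolvent_mul_eq_smul_resolvent_sub_one {a : A} {l : 𝕜} (hl : l ∈ resolventSet 𝕜 a) :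
    resolvent a l * a = l • resolvent a l - 1 := by
  have h : resolvent a l * (algebraMap 𝕜 A l - a) = 1 := Ring.inverse_mul_cancel _ hl
  rw [mul_sub, Algebra.algebraMap_eq_smul_one, mul_smul_one] at h
  rw [← h, sub_sub_cancel]

variable [CompleteSpace A]

lemma tendsto_smul_resolvent_cobounded (a : A) :
    Tendsto (fun l : 𝕜 => l • resolvent a l) (Bornology.cobounded 𝕜) (𝓝 1) := by
  have hlim : Tendsto (fun l : 𝕜 => 1 + resolvent a l * a) (Bornology.cobounded 𝕜) (𝓝 1) := by
    simpa using tendsto_const_nhds.add ((spectrum.resolvent_tendsto_cobounded a).mul_const a)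
  refine hlim.congr' ?_
  filter_upwards [spectrum.eventually_isUnit_resolvent a] with l hl
  rw [resolvent_mul_eq_smul_resolvent_sub_one (spectrum.isUnit_resolvent.mpr hl), add_sub_cancel]

lemma hasSum_resolvent {a : A} {t u : 𝕜} (ht : t ∈ resolventSet 𝕜 a)
    (h : ‖(t - u) • resolvent a t‖ < 1) :
    HasSum (fun n : ℕ => (t - u) ^ n • resolvent a t ^ (n + 1)) (resolvent a u) := by
  set c := (t - u) • resolvent a t
  have hfactor : algebraMap 𝕜 A u - a = (1 - c) * (algebraMap 𝕜 A t - a) := by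
    have h1 : resolvent a t * (algebraMap 𝕜 A t - a) = 1 := Ring.inverse_mul_cancel _ ht
    rw [sub_mul, one_mul, smul_mul_assoc, h1, ← Algebra.algebraMap_eq_smul_one, map_sub]
    abel
  have hres : resolvent a u = resolvent a t * Ring.inverse (1 - c) := by
    rw [resolvent, hfactor, Ring.inverse_mul (Or.inr ht)]
    rfl
  rw [hres]
  have hterm (n : ℕ) : resolvent a t * c ^ n = (t - u) ^ n • resolvent a t ^ (n + 1) := by
    rw [smul_pow, mul_smul_comm, pow_succ']
  simpa only [hterm] using (hasSum_geom_series_inverse c h).mul_left (resolvent a t)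

end Resolvent

namespace ProperCone

section NormedSpace

variable {E : Type*} [NormedAddCommGroup E] [NormedSpace ℝ E] (K : ProperCone ℝ E)

lemma isClosed_setOf_mapsTo : IsClosed {S : E →L[ℝ] E | MapsTo S K K} := by
  simp only [MapsTo, ofPred_forall]
  exact isClosed_iInter fun y => isClosed_iInter fun _ =>
    K.isClosed.preimage (ContinuousLinearMap.apply ℝ E y).continuous

lemma mapsTo_of_hasSum {f : ℕ → E →L[ℝ] E} {S : E →L[ℝ] E} (hS : HasSum f S)
    (hf : ∀ n, MapsTo (f n) K K) : MapsTo S K K := fun y hy =>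
  K.isClosed.mem_of_tendsto ((hS.mapL (ContinuousLinearMap.apply ℝ E y)).tendsto_sum_nat)
    (Eventually.of_forall fun _ => K.toSubmodule.sum_mem fun i _ => hf i hy)

variable [CompleteSpace E] {T : E →L[ℝ] E}

lemma mapsTo_resolvent_of_le {t u : ℝ} (ht : t ∈ resolventSet ℝ T)
    (hpos : MapsTo ⇑(resolvent T t) K K) (hut : u ≤ t) (h : ‖(t - u) • resolvent T t‖ < 1) :
    MapsTo ⇑(resolvent T u) K K := by
  refine K.mapsTo_of_hasSum (hasSum_resolvent ht h) fun n _ hy => ?_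
  rw [smul_apply, FunLike.coe_pow_eq_iterate]
  exact K.smul_mem (hpos.iterate (n + 1) hy) (pow_nonneg (sub_nonneg.mpr hut) n)

lemma mapsTo_resolvent_of_Icc_subset {a b : ℝ} (hab : a ≤ b) (hρ : Icc a b ⊆ resolventSet ℝ T)
    (hb : MapsTo ⇑(resolvent T b) K K) : MapsTo ⇑(resolvent T a) K K := by
  set s := {u : ℝ | MapsTo ⇑(resolvent T u) K K}
  have hcont : ContinuousOn (resolvent T) (Icc a b) := fun u hu =>
    (spectrum.hasDerivAt_resolvent_const_left (hρ hu)).continuousAt.continuousWithinAt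
  have hclosed : IsClosed (s ∩ Icc a b) := by
    rw [inter_comm]
    exact hcont.preimage_isClosed_of_isClosed isClosed_Icc K.isClosed_setOf_mapsTo
  refine hclosed.mem_of_ge_of_forall_exists_lt hb hab fun x ⟨hx, hax, hxb⟩ => ?_
  have hsmall : ∀ᶠ u in 𝓝 x, ‖(x - u) • resolvent T x‖ < 1 := by
    refine (continuous_const.sub continuous_id).smul continuous_const |>.norm.continuousAt
      |>.eventually_lt continuousAt_const ?_
    simp
  obtain ⟨u, hu, hua, hux⟩ :=
    ((hsmall.filter_mono nhdsWithin_le_nhds).and (Ico_mem_nhdsLT hax)).exists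
  exact ⟨u, K.mapsTo_resolvent_of_le (hρ ⟨hax.le, hxb⟩) hx hux.le hu, hua, hux⟩

end NormedSpace

section InnerProductSpace

variable {E : Type*} [NormedAddCommGroup E] [InnerProductSpace ℝ E] [CompleteSpace E]
  (K : ProperCone ℝ E)

lemma exists_sub_mem_dualCone_inner_eq_zero (x : E) :
    ∃ p ∈ K, p - x ∈ dualCone (K : Set E) ∧ ⟪p - x, p⟫ = 0 := by
  obtain ⟨p, hpK, hp⟩ :=
    exists_norm_eq_iInf_of_complete_convex K.nonempty K.isClosed.isComplete K.convex x
  have hnear := (norm_eq_iInf_iff_real_inner_le_zero K.convex hpK).mp hp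
  have horth : ⟪p - x, p⟫ = 0 := by
    have h0 := hnear 0 K.zero_mem
    have h2 := hnear (2 • p) (K.smul_mem hpK zero_le_two)
    rw [zero_sub, inner_neg_right] at h0
    rw [two_smul, add_sub_cancel_right] at h2
    rw [← neg_sub, inner_neg_left]
    linarith
  refine ⟨p, hpK, fun z hz => ?_, horth⟩
  have := hnear z hz
  rw [inner_sub_right, ← neg_sub p x, inner_neg_left, inner_neg_left, horth] at this
  linarith

variable {K} {T : E →L[ℝ] E}

lemma mapsTo_resolvent_of_isQMI_of_norm_lt (hT : IsQMI K (T : E →ₗ[ℝ] E)) {l : ℝ}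
    (hl : ‖T‖ < l) : MapsTo ⇑(resolvent T l) K K := by
  intro y hy
  have hρ : l ∈ resolventSet ℝ T := spectrum.mem_resolventSet_of_norm_lt_mul <| by
    rw [Real.norm_eq_abs, abs_of_pos ((norm_nonneg T).trans_lt hl)]
    exact (mul_le_of_le_one_right (norm_nonneg T) ContinuousLinearMap.norm_id_le).trans_lt hl
  set x := resolvent T l y
  have hy_eq : y = l • x - T x := by
    have := congr($(Ring.mul_inverse_cancel _ hρ) y)
    simpa [x, resolvent] using this.symm
  obtain ⟨p, hpK, hv, hvp⟩ := K.exists_sub_mem_dualCone_inner_eq_zero x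
  set v := p - x
  have hx : x = p - v := by simp [v]
  have hvx : ⟪v, x⟫ = -‖v‖ ^ 2 := by
    rw [hx, inner_sub_right, hvp, real_inner_self_eq_norm_sq, zero_sub]
  have hTv : ⟪v, T v⟫ ≤ ‖T‖ * ‖v‖ ^ 2 := by
    calc ⟪v, T v⟫ ≤ ‖v‖ * ‖T v‖ := real_inner_le_norm v (T v)
    _ ≤ ‖v‖ * (‖T‖ * ‖v‖) := mul_le_mul_of_nonneg_left (T.le_opNorm v) (norm_nonneg v)
    _ = ‖T‖ * ‖v‖ ^ 2 := by ring
  have hTp : 0 ≤ ⟪v, T p⟫ := hT p hpK v hv hvp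
  have hvy : 0 ≤ ⟪v, y⟫ := hv y hy
  rw [hy_eq, inner_sub_right, real_inner_smul_right, hvx, hx, map_sub, inner_sub_right] at hvy
  have hv0 : v = 0 := by
    by_contra hne
    have : 0 < ‖v‖ ^ 2 := by positivity
    nlinarith
  rwa [hx, hv0, sub_zero]

theorem mapsTo_resolvent_of_isQMI (hT : IsQMI K (T : E →ₗ[ℝ] E)) {l : ℝ}
    (hρ : Ici l ⊆ resolventSet ℝ T) : MapsTo ⇑(resolvent T l) K K :=
  K.mapsTo_resolvent_of_Icc_subset (le_max_left l (‖T‖ + 1)) (Icc_subset_Ici_self.trans hρ)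
    (mapsTo_resolvent_of_isQMI_of_norm_lt hT (by simp))

end InnerProductSpace

end ProperCone

section

variable {E : Type*} [NormedAddCommGroup E] [InnerProductSpace ℝ E]

theorem isQMI_of_eventually_mapsTo_resolvent [CompleteSpace E] {K : Set E} {T : E →L[ℝ] E}
    (h : ∀ᶠ l : ℝ in atTop, MapsTo ⇑(resolvent T l) K K) : IsQMI K (T : E →ₗ[ℝ] E) := by
  intro x hx v hv hvx
  have hlim : Tendsto (fun l : ℝ => ⟪v, (l • resolvent T l) (T x)⟫) atTop (𝓝 ⟪v, T x⟫) := by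
    have := (tendsto_smul_resolvent_cobounded (𝕜 := ℝ) T).mono_left
      IsOrderBornology.atTop_le_cobounded
    exact ((innerSL ℝ v).continuous.comp (ContinuousLinearMap.apply ℝ E (T x)).continuous
      |>.tendsto 1).comp this
  refine ge_of_tendsto hlim ?_
  have hρ : ∀ᶠ l in atTop, l ∈ resolventSet ℝ T := by
    filter_upwards [(spectrum.eventually_isUnit_resolvent T).filter_mono
      IsOrderBornology.atTop_le_cobounded] with l hl using spectrum.isUnit_resolvent.mpr hl
  filter_upwards [h, hρ, eventually_ge_atTop (0 : ℝ)] with l hl hlρ hl0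
  have hRT := congr($(resolvent_mul_eq_smul_resolvent_sub_one hlρ) x)
  simp only [mul_apply_eq_comp, sub_apply, smul_apply, one_apply_eq_self] at hRT
  rw [smul_apply, real_inner_smul_right, hRT, inner_sub_right, real_inner_smul_right, hvx, sub_zero]
  exact mul_nonneg hl0 (mul_nonneg hl0 (hv _ (hl hx)))

def IsGenProperClosedConvexCone.toProperCone {K : Set E} (hK : IsGenProperClosedConvexCone K) :
    ProperCone ℝ E where
  carrier := K
  zero_mem' := by
    obtain ⟨x, hx, -⟩ := hK.generating 0
    simpa using hK.smul_mem 0 le_rfl x hx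
  add_mem' {x y} hx hy := by
    have hmid := hK.convex hx hy (by norm_num : (0 : ℝ) ≤ 1 / 2) (by norm_num : (0 : ℝ) ≤ 1 / 2)
      (by norm_num)
    convert hK.smul_mem 2 zero_le_two _ hmid using 1
    module
  smul_mem' c x hx := hK.smul_mem c c.2 x hx
  isClosed' := hK.closed

end

lemma re_le_specBound (A : V →ₗ[ℝ] V) {z : ℂ} (hz : z ∈ cSpectrum A) : z.re ≤ specBound A := by
  refine le_csSup (Set.Finite.bddAbove (Set.Finite.image _ ?_)) ⟨z, hz, rfl⟩
  convert (LinearMap.charpoly A).rootSet_finite ℂ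
  ext z
  simp [cSpectrum, Polynomial.mem_rootSet, (LinearMap.charpoly_monic A).ne_zero]

lemma mem_resolventSet_of_specBound_lt (A : V →ₗ[ℝ] V) {l : ℝ} (hl : specBound A < l) :
    l ∈ resolventSet ℝ (LinearMap.toContinuousLinearMap A) := by
  rw [spectrum.mem_resolventSet_iff, ← spectrum.notMem_iff, ContinuousLinearMap.spectrum_eq,
    LinearMap.coe_toContinuousLinearMap, Module.End.mem_spectrum_iff_isRoot_charpoly]
  intro hroot
  have hmem : (l : ℂ) ∈ cSpectrum A := by
    change Polynomial.aeval (algebraMap ℝ ℂ l) _ = 0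
    rw [Polynomial.aeval_algebraMap_apply_eq_algebraMap_eval, hroot.eq_zero, map_zero]
  simpa using (re_le_specBound A hmem).trans_lt hl

/-- `A` is quasimonotone increasing w.r.t. `K` iff for every `λ > τ(A)` the map
`λ·id − A` is invertible and its inverse maps `K` into `K`. -/
theorem qmi_iff_resolvent_maps_cone (K : Set V) (hK : IsGenProperClosedConvexCone K)
    (A : V →ₗ[ℝ] V) :
    IsQMI K A ↔
      ∀ l : ℝ, specBound A < l →
        Function.Bijective (l • (LinearMap.id : V →ₗ[ℝ] V) - A) ∧
        ∀ x : V, (l • (LinearMap.id : V →ₗ[ℝ] V) - A) x ∈ K → x ∈ K := by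
  set T := LinearMap.toContinuousLinearMap A
  have hB (l : ℝ) :
      ⇑(l • (LinearMap.id : V →ₗ[ℝ] V) - A) = ⇑(algebraMap ℝ (V →L[ℝ] V) l - T) := by
    ext x; simp [T]
  have hρ (l : ℝ) (hl : specBound A < l) : l ∈ resolventSet ℝ T :=
    mem_resolventSet_of_specBound_lt A hl
  constructor
  · intro hA l hl
    refine ⟨hB l ▸ ContinuousLinearMap.isUnit_iff_bijective.mp (hρ l hl), fun x hx => ?_⟩
    have hinv : resolvent T l ((algebraMap ℝ (V →L[ℝ] V) l - T) x) = x :=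
      congr($(Ring.inverse_mul_cancel _ (hρ l hl)) x)
    rw [hB] at hx
    exact hinv ▸ ProperCone.mapsTo_resolvent_of_isQMI (K := hK.toProperCone) (T := T) hA
      (fun u hu => hρ u (hl.trans_le hu)) hx
  · intro h
    refine isQMI_of_eventually_mapsTo_resolvent (T := T) ?_
    filter_upwards [eventually_gt_atTop (specBound A)] with l hl y hy
    refine (h l hl).2 _ ?_
    have hinv : (algebraMap ℝ (V →L[ℝ] V) l - T) (resolvent T l y) = y :=
      congr($(Ring.mul_inverse_cancel _ (hρ l hl)) y)
    rwa [hB, hinv]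
end
end
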